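/- Let N ≥ 2, 1 < p < N and q_c < q < p, and set λ̃_{N,p,q} = β_q^{−1} ( N − p − β_q (p−1) )^{1/(q+1−p)} (the quantity N − p − β_q(p−1) is positive since q > q_c). Then the function V(x) = −λ̃_{N,p,q} |x|^{−β_q} is a negative strong solution of (E) on ℝ^N ∖ {0}. -/

import Mathlib

open Metric Set Filter Topology MeasureTheory

/-- The vector field `x ↦ |∇u(x)|^{p-2} ∇u(x)`. -/
noncomputable def pGradField {N : ℕ} (p : ℝ) (u : EuclideanSpace ℝ (Fin N) → ℝ)
    (x : EuclideanSpace ℝ (Fin N)) : EuclideanSpace ℝ (Fin N) :=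
  ‖gradient u x‖ ^ (p - 2) • gradient u x

/-- A strong solution of `(E) : -Δ_p u + |∇u|^q = 0` on an open set `G ⊆ ℝ^N`. -/
def IsStrongSolution {N : ℕ} (p q : ℝ) (G : Set (EuclideanSpace ℝ (Fin N)))
    (u : EuclideanSpace ℝ (Fin N) → ℝ) : Prop :=
  ContDiffOn ℝ 1 u G ∧
  ContDiffOn ℝ 3 u {x | x ∈ G ∧ gradient u x ≠ 0} ∧
  ∀ x ∈ G, DifferentiableAt ℝ (pGradField p u) x ∧
    LinearMap.trace ℝ (EuclideanSpace ℝ (Fin N))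
      (fderiv ℝ (pGradField p u) x : EuclideanSpace ℝ (Fin N) →ₗ[ℝ] EuclideanSpace ℝ (Fin N))
      = ‖gradient u x‖ ^ q

section Aux

variable {F : Type*} [NormedAddCommGroup F] [InnerProductSpace ℝ F]

lemma aux_hasFDerivAt_norm_rpow (t : ℝ) {x : F} (hx : x ≠ 0) :
    HasFDerivAt (fun y : F => ‖y‖ ^ t) (innerSL ℝ ((t * ‖x‖ ^ (t - 2)) • x)) x := by
  have hxn : (0:ℝ) < ‖x‖ := norm_pos_iff.2 hx
  have key : ∀ y : F, ((‖y‖ ^ 2 : ℝ)) ^ (t / 2) = ‖y‖ ^ t := by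
    intro y
    rw [← Real.rpow_natCast ‖y‖ 2, ← Real.rpow_mul (norm_nonneg y)]
    congr 1; ring
  have h1 : HasFDerivAt (fun y : F => (‖y‖ ^ 2 : ℝ)) (2 • (innerSL ℝ x)) x :=
    (hasStrictFDerivAt_norm_sq x).hasFDerivAt
  have h2 : HasDerivAt (fun z : ℝ => z ^ (t / 2))
      ((t / 2) * (‖x‖ ^ 2) ^ (t / 2 - 1)) (‖x‖ ^ 2) :=
    Real.hasDerivAt_rpow_const (Or.inl (by positivity))
  have h3 := h2.comp_hasFDerivAt x h1
  have heq : ((t / 2) * (‖x‖ ^ 2) ^ (t / 2 - 1)) • (2 • (innerSL ℝ x))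
      = innerSL ℝ ((t * ‖x‖ ^ (t - 2)) • x) := by
    ext y
    have hp : ((‖x‖ ^ 2 : ℝ)) ^ (t / 2 - 1) = ‖x‖ ^ (t - 2) := by
      rw [← Real.rpow_natCast ‖x‖ 2, ← Real.rpow_mul (norm_nonneg x)]
      congr 1; ring
    simp only [ContinuousLinearMap.smul_apply, innerSL_apply_apply, inner_smul_left,
      RCLike.star_def, starRingEnd_apply, star_trivial, smul_eq_mul, hp]
    ring
  rw [heq] at h3
  have : (fun y : F => ‖y‖ ^ t) = fun y : F => ((‖y‖ ^ 2 : ℝ)) ^ (t / 2) := by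
    funext y; rw [key]
  rw [this]
  exact h3

end Aux

section Trace

variable {F : Type*} [AddCommGroup F] [Module ℝ F] [Module.Finite ℝ F] [Module.Free ℝ F]

lemma aux_trace_smulRight (f : F →ₗ[ℝ] ℝ) (v : F) :
    LinearMap.trace ℝ F (f.smulRight v) = f v := by
  have h : f.smulRight v = (LinearMap.toSpanSingleton ℝ F v).comp f := by
    ext y; simp [LinearMap.toSpanSingleton_apply]
  rw [h, LinearMap.trace_comp_comm']
  have h2 : f.comp (LinearMap.toSpanSingleton ℝ F v) = (f v) • LinearMap.id := by
    ext; simp [LinearMap.toSpanSingleton_apply, mul_comm]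
  rw [h2, _root_.map_smul, LinearMap.trace_id, smul_eq_mul]
  simp

end Trace

/-- The explicit singular solution `V(x) = -λ̃_{N,p,q} |x|^{-β_q}` is a negative strong
solution of (E) on `ℝ^N ∖ {0}` when `q_c < q < p`. -/
theorem explicit_negative_singular_solution (N : ℕ) (hN : 2 ≤ N) (p q : ℝ) (hp1 : 1 < p)
    (hpN : p < N) (hq1 : (N : ℝ) * (p - 1) / ((N : ℝ) - 1) < q) (hq2 : q < p) :
    IsStrongSolution p q ({(0 : EuclideanSpace ℝ (Fin N))}ᶜ)
      (fun x => -(((p - q) / (q + 1 - p))⁻¹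
          * ((N : ℝ) - p - ((p - q) / (q + 1 - p)) * (p - 1)) ^ (1 / (q + 1 - p))
          * ‖x‖ ^ (-((p - q) / (q + 1 - p))))) ∧
    ∀ x : EuclideanSpace ℝ (Fin N), x ≠ 0 →
      -(((p - q) / (q + 1 - p))⁻¹
          * ((N : ℝ) - p - ((p - q) / (q + 1 - p)) * (p - 1)) ^ (1 / (q + 1 - p))
          * ‖x‖ ^ (-((p - q) / (q + 1 - p)))) < 0 := by
  have hN2 : (2:ℝ) ≤ (N:ℝ) := by exact_mod_cast hN
  set b : ℝ := (p - q) / (q + 1 - p) with hbdef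
  set A : ℝ := (N : ℝ) - p - b * (p - 1) with hAdef
  set C : ℝ := b⁻¹ * A ^ (1 / (q + 1 - p)) with hCdef
  set u : EuclideanSpace ℝ (Fin N) → ℝ := fun x => -(C * ‖x‖ ^ (-b)) with hudef
  -- basic positivity facts
  have hqp1 : p - 1 < q := by
    have h0 : (0:ℝ) < (N:ℝ) - 1 := by linarith
    have hle : (p - 1) ≤ (N:ℝ) * (p - 1) / ((N:ℝ) - 1) := by
      rw [le_div_iff₀ h0]; nlinarith
    linarith
  have h1 : 0 < q + 1 - p := by linarith
  have h2 : 0 < p - q := by linarith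
  have hb : 0 < b := div_pos h2 h1
  have hA : 0 < A := by
    have hkey : A * (q + 1 - p) = q * ((N:ℝ) - 1) - (N:ℝ) * (p - 1) := by
      rw [hAdef, hbdef]; field_simp; ring
    have h0 : (0:ℝ) < (N:ℝ) - 1 := by linarith
    have h3 : (N:ℝ) * (p - 1) < q * ((N:ℝ) - 1) := by
      have := (div_lt_iff₀ h0).1 hq1
      linarith
    nlinarith
  have hCb : C * b = A ^ (1 / (q + 1 - p)) := by
    rw [hCdef]; field_simp
  have hApow : 0 < A ^ (1 / (q + 1 - p)) := Real.rpow_pos_of_pos hA _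
  have hCbpos : 0 < C * b := hCb ▸ hApow
  have hC : 0 < C := by
    rw [hCdef]
    exact mul_pos (inv_pos.2 hb) hApow
  -- the gradient of u
  have hgrad : ∀ y : EuclideanSpace ℝ (Fin N), y ≠ 0 →
      HasGradientAt u ((C * b * ‖y‖ ^ (-b - 2)) • y) y := by
    intro y hy
    rw [hasGradientAt_iff_hasFDerivAt]
    have h := (aux_hasFDerivAt_norm_rpow (-b) hy).const_mul (-C)
    have hfun : u = fun z => -C * ‖z‖ ^ (-b) := by
      funext z; simp only [hudef]; ring
    rw [hfun]
    refine h.congr_fderiv ?_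
    ext z
    simp only [ContinuousLinearMap.smul_apply, smul_eq_mul,
      InnerProductSpace.toDual_apply_apply, innerSL_apply_apply, real_inner_smul_left]
    ring
  have hgradu : ∀ y : EuclideanSpace ℝ (Fin N), y ≠ 0 →
      gradient u y = (C * b * ‖y‖ ^ (-b - 2)) • y := fun y hy => (hgrad y hy).gradient
  have hgnorm : ∀ y : EuclideanSpace ℝ (Fin N), y ≠ 0 →
      ‖gradient u y‖ = C * b * ‖y‖ ^ (-b - 1) := by
    intro y hy
    have hr : (0:ℝ) < ‖y‖ := norm_pos_iff.2 hy
    have hrp : (0:ℝ) < ‖y‖ ^ (-b - 2) := Real.rpow_pos_of_pos hr _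
    rw [hgradu y hy, norm_smul, Real.norm_eq_abs, abs_of_pos (mul_pos hCbpos hrp)]
    have h := Real.rpow_add_one (ne_of_gt hr) (-b - 2)
    rw [show -b - 2 + 1 = -b - 1 by ring] at h
    rw [h]; ring
  set K : ℝ := (C * b) ^ (p - 1) with hKdef
  set e : ℝ := (-b - 1) * (p - 1) - 1 with hedef
  have hKpos : 0 < K := Real.rpow_pos_of_pos hCbpos _
  have hpG : ∀ y : EuclideanSpace ℝ (Fin N), y ≠ 0 →
      pGradField p u y = (K * ‖y‖ ^ e) • y := by
    intro y hy
    have hr : (0:ℝ) < ‖y‖ := norm_pos_iff.2 hy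
    simp only [pGradField]
    rw [hgnorm y hy, hgradu y hy, smul_smul]
    congr 1
    rw [Real.mul_rpow hCbpos.le (Real.rpow_pos_of_pos hr (-b - 1)).le,
      ← Real.rpow_mul (norm_nonneg y)]
    have e1 : (C * b) ^ (p - 2) * (C * b) = K := by
      have h := Real.rpow_add_one (ne_of_gt hCbpos) (p - 2)
      rw [show p - 2 + 1 = p - 1 by ring] at h
      rw [hKdef, h]
    have e2 : ‖y‖ ^ ((-b - 1) * (p - 2)) * ‖y‖ ^ (-b - 2) = ‖y‖ ^ e := by
      rw [← Real.rpow_add hr]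
      congr 1
      rw [hedef]; ring
    calc (C * b) ^ (p - 2) * ‖y‖ ^ ((-b - 1) * (p - 2)) * (C * b * ‖y‖ ^ (-b - 2))
        = ((C * b) ^ (p - 2) * (C * b)) * (‖y‖ ^ ((-b - 1) * (p - 2)) * ‖y‖ ^ (-b - 2)) := by
          ring
      _ = K * ‖y‖ ^ e := by rw [e1, e2]
  -- derivative of the vector field
  have hFderiv : ∀ x : EuclideanSpace ℝ (Fin N), x ≠ 0 →
      HasFDerivAt (fun y : EuclideanSpace ℝ (Fin N) => (K * ‖y‖ ^ e) • y)
        ((K * ‖x‖ ^ e) • ContinuousLinearMap.id ℝ (EuclideanSpace ℝ (Fin N))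
          + (innerSL ℝ ((K * (e * ‖x‖ ^ (e - 2))) • x)).smulRight x) x := by
    intro x hx
    have h := (aux_hasFDerivAt_norm_rpow e hx).const_mul K
    have h2 : HasFDerivAt (fun y : EuclideanSpace ℝ (Fin N) => K * ‖y‖ ^ e)
        (innerSL ℝ ((K * (e * ‖x‖ ^ (e - 2))) • x)) x := by
      refine h.congr_fderiv ?_
      ext z
      simp only [ContinuousLinearMap.smul_apply, smul_eq_mul, innerSL_apply_apply,
        real_inner_smul_left]
      ring
    have h3 := h2.smul (hasFDerivAt_id x)
    exact h3
  refine ⟨⟨?_, ?_, fun x hx => ?_⟩, fun x hx => ?_⟩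
  · -- C¹ regularity
    intro x hx
    have hx' : x ≠ 0 := hx
    exact (((contDiffAt_const (c := C)).mul ((Real.contDiffAt_rpow_const_of_ne
      (norm_ne_zero_iff.2 hx')).comp x (contDiffAt_norm ℝ hx'))).neg).contDiffWithinAt
  · -- C³ regularity
    intro x hx
    have hx' : x ≠ 0 := hx.1
    exact (((contDiffAt_const (c := C)).mul ((Real.contDiffAt_rpow_const_of_ne
      (norm_ne_zero_iff.2 hx')).comp x (contDiffAt_norm ℝ hx'))).neg).contDiffWithinAt
  · -- the equation
    have hx' : x ≠ 0 := hx
    have hr : (0:ℝ) < ‖x‖ := norm_pos_iff.2 hx'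
    have hev : pGradField p u =ᶠ[𝓝 x]
        (fun y : EuclideanSpace ℝ (Fin N) => (K * ‖y‖ ^ e) • y) := by
      filter_upwards [isOpen_compl_singleton.mem_nhds hx] with y hy
      exact hpG y hy
    have hD : HasFDerivAt (pGradField p u)
        ((K * ‖x‖ ^ e) • ContinuousLinearMap.id ℝ (EuclideanSpace ℝ (Fin N))
          + (innerSL ℝ ((K * (e * ‖x‖ ^ (e - 2))) • x)).smulRight x) x :=
      (hFderiv x hx').congr_of_eventuallyEq hev
    refine ⟨hD.differentiableAt, ?_⟩
    rw [hD.fderiv]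
    have hcoe : (((K * ‖x‖ ^ e) • ContinuousLinearMap.id ℝ (EuclideanSpace ℝ (Fin N))
          + (innerSL ℝ ((K * (e * ‖x‖ ^ (e - 2))) • x)).smulRight x :
          EuclideanSpace ℝ (Fin N) →L[ℝ] EuclideanSpace ℝ (Fin N)) :
          EuclideanSpace ℝ (Fin N) →ₗ[ℝ] EuclideanSpace ℝ (Fin N))
        = (K * ‖x‖ ^ e) • (LinearMap.id)
          + ((innerSL ℝ ((K * (e * ‖x‖ ^ (e - 2))) • x) :
              EuclideanSpace ℝ (Fin N) →L[ℝ] ℝ) :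
              EuclideanSpace ℝ (Fin N) →ₗ[ℝ] ℝ).smulRight x := by
      ext z
      simp
    rw [hcoe, map_add, _root_.map_smul, LinearMap.trace_id, aux_trace_smulRight,
      hgnorm x hx']
    rw [ContinuousLinearMap.coe_coe, innerSL_apply_apply, real_inner_smul_left,
      real_inner_self_eq_norm_sq]
    have hfin : ((Module.finrank ℝ (EuclideanSpace ℝ (Fin N))) : ℝ) = (N : ℝ) := by
      rw [finrank_euclideanSpace_fin]
    rw [hfin, smul_eq_mul]
    -- arithmetic
    have hxx : ‖x‖ ^ (e - 2) * ‖x‖ ^ 2 = ‖x‖ ^ e := by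
      rw [← Real.rpow_natCast ‖x‖ 2, ← Real.rpow_add hr]
      congr 1; push_cast; ring
    have hexp : e = (-b - 1) * q := by
      rw [hedef, hbdef]; field_simp; ring
    have hNe : (N:ℝ) + e = A := by
      rw [hedef, hAdef]; ring
    have hCbA : (C * b) ^ (q + 1 - p) = A := by
      rw [hCb, ← Real.rpow_mul hA.le, one_div_mul_cancel (ne_of_gt h1), Real.rpow_one]
    have hKA : K * A = (C * b) ^ q := by
      rw [hKdef, ← hCbA, ← Real.rpow_add hCbpos]
      congr 1; ring
    have hRHS : (C * b * ‖x‖ ^ (-b - 1)) ^ q = (C * b) ^ q * ‖x‖ ^ e := by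
      rw [Real.mul_rpow hCbpos.le (Real.rpow_pos_of_pos hr _).le,
        ← Real.rpow_mul (norm_nonneg x), ← hexp]
    rw [hRHS, ← hKA]
    have hterm : K * (e * ‖x‖ ^ (e - 2)) * ‖x‖ ^ 2 = K * e * ‖x‖ ^ e := by
      calc K * (e * ‖x‖ ^ (e - 2)) * ‖x‖ ^ 2
          = K * e * (‖x‖ ^ (e - 2) * ‖x‖ ^ 2) := by ring
        _ = K * e * ‖x‖ ^ e := by rw [hxx]
    rw [hterm]
    linear_combination (K * ‖x‖ ^ e) * hNe
  · -- negativity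
    have hr : (0:ℝ) < ‖x‖ ^ (-b) := Real.rpow_pos_of_pos (norm_pos_iff.2 hx) _
    have := mul_pos hC hr
    linarith
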